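/- The balanced wirings form a subsemiring of the unification semiring, and for balanced wirings F, G, the height of FG is at most max(h(F), h(G)). -/

import Mathlib

/-- First-order terms over natural-number symbols: variables and applications. -/
inductive Tm : Type
  | var : ℕ → Tm
  | app : ℕ → List Tm → Tm

namespace Tm

/-- Apply a substitution (map from variables to terms) homomorphically. -/
def subst (σ : ℕ → Tm) : Tm → Tm
  | var x => σ x
  | app f ts => app f (ts.attach.map fun ⟨t, _⟩ => subst σ t)

/-- List of variables occurring in a term. -/
def varsL : Tm → List ℕ
  | var x => [x]
  | app _ ts => ts.attach.flatMap fun ⟨t, _⟩ => varsL t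

/-- Height of a term: maximal distance from the root to a subterm. -/
def height : Tm → ℕ
  | var _ => 0
  | app _ ts => (ts.attach.map fun ⟨t, _⟩ => height t + 1).foldr max 0

/-- Heights of the occurrences of the variable `x` in a term. -/
def occs (x : ℕ) : Tm → List ℕ
  | var y => if y = x then [0] else []
  | app _ ts => ts.attach.flatMap fun ⟨t, _⟩ => (occs x t).map (· + 1)

/-- Symbols occurring in a term, together with the arity they are used with. -/
def symar : Tm → List (ℕ × ℕ)
  | var _ => []
  | app f ts => (f, ts.length) :: ts.attach.flatMap fun ⟨t, _⟩ => symar t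

end Tm

open Tm

/-- Set of variables of a term. -/
def tvars (t : Tm) : Set ℕ := {x | x ∈ t.varsL}

/-- A term is closed when it has no variables. -/
def Closed (t : Tm) : Prop := t.varsL = []

/-- A substitution is finitary when it is the identity on all but finitely many variables. -/
def Finitary (σ : ℕ → Tm) : Prop := {x | σ x ≠ .var x}.Finite

/-- `σ` unifies `t` and `u`. -/
def Unifies (σ : ℕ → Tm) (t u : Tm) : Prop := subst σ t = subst σ u

/-- `θ` is a most general unifier of `t` and `u`: a (finitary) unifier such that
any other finitary unifier factors as an instance of it. -/
def IsMGU (θ : ℕ → Tm) (t u : Tm) : Prop :=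
  Finitary θ ∧ Unifies θ t u ∧
    ∀ σ, Finitary σ → Unifies σ t u → ∃ ρ, Finitary ρ ∧ ∀ x, σ x = subst ρ (θ x)

/-- Renaming of a term along a bijection of variables. -/
def rename (π : ℕ ≃ ℕ) (t : Tm) : Tm := subst (fun x => .var (π x)) t

/-- A flow is (the data of) a pair of terms `head ⊸ body`. -/
abbrev UFlow := Tm × Tm

/-- The flow condition: the variables of the head occur in the body. -/
def IsFlow (f : UFlow) : Prop := tvars f.1 ⊆ tvars f.2

/-- Equality of flows up to (simultaneous, bijective) renaming of variables. -/
def FlowEquiv (f g : UFlow) : Prop :=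
  ∃ π : ℕ ≃ ℕ, rename π f.1 = g.1 ∧ rename π f.2 = g.2

/-- Variables of a flow. -/
def flowVars (f : UFlow) : Set ℕ := tvars f.1 ∪ tvars f.2

/-- `h` is a product of the flows `f = u ⊸ v` and `g = t ⊸ w`: choosing representatives
with disjoint variables, `h = uθ ⊸ wθ` for `θ` a most general unifier of `v` and `t`. -/
def IsProd (f g h : UFlow) : Prop :=
  ∃ f' g' θ, FlowEquiv f f' ∧ FlowEquiv g g' ∧ flowVars f' ∩ flowVars g' = ∅ ∧
    IsMGU θ f'.2 g'.1 ∧ h = (subst θ f'.1, subst θ g'.2)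

/-- A wiring: a set of flows (finite sets of flows are considered up to renaming,
so we model them as sets of representatives). -/
abbrev Wiring := Set UFlow

/-- Product of wirings: pointwise product of flows, where defined. -/
def wmul (F G : Wiring) : Wiring := {h | ∃ f ∈ F, ∃ g ∈ G, IsProd f g h}

/-- The unit wiring `I = x ⊸ x`. -/
def wI : Wiring := {f | FlowEquiv (.var 0, .var 0) f}

/-- Powers of a wiring. -/
def wpow (F : Wiring) : ℕ → Wiring
  | 0 => wI
  | n + 1 => wmul F (wpow F n)

/-- Equality of wirings up to renaming of each flow. -/
def WEq (F G : Wiring) : Prop :=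
  (∀ f ∈ F, ∃ g ∈ G, FlowEquiv f g) ∧ ∀ g ∈ G, ∃ f ∈ F, FlowEquiv f g

/-- A fact: a flow of the form `t ⊸ t` with `t` closed. -/
def IsFact (f : UFlow) : Prop := Closed f.1 ∧ f.2 = f.1

/-- Application of a wiring to (the fact associated with) a closed term:
the set of product flows. -/
def appF (F : Wiring) (t : Tm) : Set UFlow := {h | ∃ f ∈ F, IsProd f (t, t) h}

/-- Application of a wiring to a fact, keeping the facts produced. -/
def factApp (F : Wiring) (t : Tm) : Set Tm := {v | ∃ f ∈ F, IsProd f (t, t) (v, v)}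

/-- A wiring is deterministic if it produces at most one fact from any fact. -/
def Deterministic (F : Wiring) : Prop := ∀ t, Closed t → (appF F t).Subsingleton

/-- Two terms are matchable if renamings of them with disjoint variables are unifiable. -/
def Matchable (t u : Tm) : Prop :=
  ∃ (π π' : ℕ ≃ ℕ), tvars (rename π t) ∩ tvars (rename π' u) = ∅ ∧
    ∃ θ, Finitary θ ∧ Unifies θ (rename π t) (rename π' u)

/-- A flow is balanced if each variable has all its occurrences at the same height. -/
def BalancedF (f : UFlow) : Prop :=
  ∀ x, ∀ n ∈ occs x f.1 ++ occs x f.2, ∀ m ∈ occs x f.1 ++ occs x f.2, n = m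

/-- Height of a flow. -/
def heightF (f : UFlow) : ℕ := max f.1.height f.2.height

/-- A wiring is balanced if all its flows are. -/
def BalancedW (F : Wiring) : Prop := ∀ f ∈ F, BalancedF f

/-- Height of a wiring: maximal height of its flows. -/
noncomputable def heightW (F : Wiring) : ℕ := sSup (heightF '' F)

/-- The computation space of a wiring `F`: closed terms (identified with the
corresponding facts) of height at most `heightW F` built using only symbols
(with their arities) occurring in `F` and the constant `⋆` (symbol `0`). -/
noncomputable def compSpace (F : Wiring) : Set Tm :=
  {t | Closed t ∧ t.height ≤ heightW F ∧
    ∀ q ∈ t.symar, q = (0, 0) ∨ ∃ f ∈ F, q ∈ f.1.symar ++ f.2.symar}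

/-- Nilpotency of a wiring: some power is the empty wiring. -/
def Nilpotent (F : Wiring) : Prop := ∃ n, 0 < n ∧ wpow F n = ∅

/-- Edges of the computation graph of `F`: from `u` to `v` iff `v ∈ F u`. -/
noncomputable def Edge (F : Wiring) (u v : Tm) : Prop :=
  u ∈ compSpace F ∧ v ∈ compSpace F ∧ v ∈ factApp F u

/-- Acyclicity of the computation graph of `F`. -/
noncomputable def AcyclicCG (F : Wiring) : Prop :=
  ¬ ∃ n, 0 < n ∧ ∃ c : ℕ → Tm, (∀ i < n, Edge F (c i) (c (i + 1))) ∧ c n = c 0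

/-! In balanced, variable-disjoint flows `u ⊸ v` and `t ⊸ w` every variable `x` occurs at a
single depth `ℓ x`; let `B` be the larger of the two flow heights. Two modifications of an MGU `θ`
of `v` and `t` still unify them: cutting each `θ x` at depth `B - ℓ x`, and replacing every
variable occurrence in `θ x` by the variable named after its absolute depth. Both factor as
`ρ ∘ θ`; the first gives `ℓ x + height (θ x) ≤ B`, the second that each variable `z` of the images
`θ x` sits at the single absolute depth named by `ρ z`. Hence `uθ ⊸ wθ` is balanced and of height
at most `B`. -/

namespace Tm

@[induction_eliminator]
theorem induction {P : Tm → Prop} (var : ∀ x, P (.var x))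
    (app : ∀ f ts, (∀ t ∈ ts, P t) → P (.app f ts)) : ∀ t, P t
  | .var x => var x
  | .app f ts => app f ts fun t _ => induction var app t

@[simp] theorem subst_var (σ : ℕ → Tm) (x : ℕ) : subst σ (var x) = σ x := by simp [subst]

@[simp] theorem subst_app (σ : ℕ → Tm) (f : ℕ) (ts : List Tm) :
    subst σ (app f ts) = app f (ts.map (subst σ)) := by simp [subst]

@[simp] theorem varsL_var (x : ℕ) : varsL (var x) = [x] := by simp [varsL]

@[simp] theorem varsL_app (f : ℕ) (ts : List Tm) : varsL (app f ts) = ts.flatMap varsL := by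
  simp [varsL]

@[simp] theorem occs_var (x y : ℕ) : occs x (var y) = if y = x then [0] else [] := by simp [occs]

@[simp] theorem occs_app (x f : ℕ) (ts : List Tm) :
    occs x (app f ts) = ts.flatMap fun t => (occs x t).map (· + 1) := by simp [occs]

@[simp] theorem height_var (x : ℕ) : height (var x) = 0 := by simp [height]

theorem height_app (f : ℕ) (ts : List Tm) :
    height (app f ts) = (ts.map fun t => height t + 1).foldr max 0 := by simp [height]

theorem height_app_le_iff {f B : ℕ} {ts : List Tm} :
    height (app f ts) ≤ B ↔ ∀ t ∈ ts, height t + 1 ≤ B := by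
  rw [height_app]
  induction ts with
  | nil => simp
  | cons t ts ih => simp [ih]

theorem mem_varsL_of_mem_occs {x m : ℕ} {s : Tm} (h : m ∈ occs x s) : x ∈ varsL s := by
  induction s generalizing m with
  | var y => by_cases hy : y = x <;> simp_all
  | app f ts ih =>
    simp only [occs_app, List.mem_flatMap, List.mem_map] at h
    obtain ⟨t, ht, m, hm, -⟩ := h
    simpa using ⟨t, ht, ih t ht hm⟩

theorem subst_congr {σ τ : ℕ → Tm} {s : Tm} (h : ∀ x ∈ varsL s, σ x = τ x) :
    subst σ s = subst τ s := by
  induction s with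
  | var x => simpa using h x
  | app f ts ih =>
    simp only [subst_app, app.injEq, true_and]
    exact List.map_congr_left fun t ht => ih t ht fun x hx => h x (by simpa using ⟨t, ht, hx⟩)

theorem height_le_height_subst (σ : ℕ → Tm) (s : Tm) : height s ≤ height (subst σ s) := by
  induction s with
  | var x => simp
  | app f ts ih =>
    rw [height_app_le_iff]
    intro t ht
    have : height (subst σ t) + 1 ≤ height (app f (ts.map (subst σ))) :=
      height_app_le_iff.1 le_rfl _ (List.mem_map_of_mem ht)
    simpa using (Nat.succ_le_succ (ih t ht)).trans this

theorem height_subst_var (π : ℕ → ℕ) (s : Tm) :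
    height (subst (fun x => var (π x)) s) = height s := by
  induction s with
  | var x => simp
  | app f ts ih =>
    simp only [subst_app, height_app, List.map_map]
    congr 1
    exact List.map_congr_left fun t ht => by simp [ih t ht]

/-- `s` sits at depth `d` inside a term in which every variable `x` occurs only at depth `ℓ x`. -/
def Levelled (ℓ : ℕ → ℕ) (d : ℕ) (s : Tm) : Prop := ∀ x, ∀ m ∈ occs x s, d + m = ℓ x

variable {ℓ : ℕ → ℕ} {d : ℕ}

@[simp] theorem levelled_var_iff {x : ℕ} : Levelled ℓ d (var x) ↔ d = ℓ x := by
  simp [Levelled]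

@[simp] theorem levelled_app_iff {f : ℕ} {ts : List Tm} :
    Levelled ℓ d (app f ts) ↔ ∀ t ∈ ts, Levelled ℓ (d + 1) t := by
  simp only [Levelled, occs_app, List.mem_flatMap, List.mem_map]
  constructor
  · intro h t ht x m hm
    rw [← h x (m + 1) ⟨t, ht, m, hm, rfl⟩]
    omega
  · rintro h x _ ⟨t, ht, m, hm, rfl⟩
    rw [← h t ht x m hm]
    omega

theorem Levelled.congr {ℓ' : ℕ → ℕ} {s : Tm} (hs : Levelled ℓ d s)
    (h : ∀ x ∈ varsL s, ℓ x = ℓ' x) : Levelled ℓ' d s :=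
  fun x m hm => (hs x m hm).trans (h x (mem_varsL_of_mem_occs hm))

theorem Levelled.subst {ℓ' : ℕ → ℕ} {θ : ℕ → Tm} {s : Tm} (hs : Levelled ℓ d s)
    (hθ : ∀ x ∈ varsL s, Levelled ℓ' (ℓ x) (θ x)) : Levelled ℓ' d (Tm.subst θ s) := by
  induction s generalizing d with
  | var x => simp_all
  | app f ts ih =>
    simp only [levelled_app_iff, subst_app, List.mem_map] at hs ⊢
    rintro _ ⟨t, ht, rfl⟩
    exact ih t ht (hs t ht) fun x hx => hθ x (by simpa using ⟨t, ht, hx⟩)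

theorem Levelled.rename {s : Tm} (hs : Levelled ℓ d s) (π : ℕ ≃ ℕ) :
    Levelled (ℓ ∘ π.symm) d (rename π s) :=
  hs.subst fun x _ => by simp

theorem Levelled.height_subst_le {θ : ℕ → Tm} {s : Tm} {B : ℕ} (hs : Levelled ℓ d s)
    (hsB : height s ≤ B - d) (hθ : ∀ x ∈ varsL s, height (θ x) ≤ B - ℓ x) :
    height (Tm.subst θ s) ≤ B - d := by
  induction s generalizing d with
  | var x => simp_all
  | app f ts ih =>
    rw [levelled_app_iff] at hs
    rw [height_app_le_iff] at hsB
    simp only [subst_app, height_app_le_iff, List.mem_map]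
    rintro _ ⟨t, ht, rfl⟩
    have hsBt := hsB t ht
    have := ih t ht (hs t ht) (by omega) fun x hx => hθ x (by simpa using ⟨t, ht, hx⟩)
    omega

def cut : ℕ → Tm → Tm
  | _, var x => var x
  | 0, app f _ => app f []
  | k + 1, app f ts => app f (ts.map (cut k))

def mark (d : ℕ) : Tm → Tm
  | var _ => var d
  | app f ts => app f (ts.map (mark (d + 1)))

theorem height_cut_le (k : ℕ) (s : Tm) : height (cut k s) ≤ k := by
  induction k generalizing s with
  | zero => cases s <;> simp [cut, height_app]
  | succ k ih =>
    cases s with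
    | var x => simp [cut]
    | app f ts =>
      simp only [cut, height_app_le_iff, List.mem_map]
      rintro _ ⟨t, -, rfl⟩
      exact Nat.succ_le_succ (ih t)

theorem cut_app_nil (k f : ℕ) : cut k (app f []) = app f [] := by
  cases k <;> simp [cut]

variable {θ : ℕ → Tm}

theorem Levelled.subst_cut {s : Tm} {B : ℕ} (hs : Levelled ℓ d s) (hsB : height s ≤ B - d) :
    Tm.subst (fun x => cut (B - ℓ x) (θ x)) s = cut (B - d) (Tm.subst θ s) := by
  induction s generalizing d with
  | var x => simp_all
  | app f ts ih =>
    rw [levelled_app_iff] at hs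
    rw [height_app_le_iff] at hsB
    cases ts with
    | nil => simp [cut_app_nil]
    | cons t ts =>
      obtain ⟨k, hk⟩ : ∃ k, B - d = k + 1 := ⟨B - d - 1, by have := hsB t (by simp); omega⟩
      simp only [subst_app, hk, cut, List.map_map, app.injEq, true_and]
      refine List.map_congr_left fun t' ht' => ?_
      have := hsB t' ht'
      simpa [show k = B - (d + 1) by omega] using ih t' ht' (hs t' ht') (by omega)

theorem Levelled.subst_mark {s : Tm} (hs : Levelled ℓ d s) :
    Tm.subst (fun x => mark (ℓ x) (θ x)) s = mark d (Tm.subst θ s) := by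
  induction s generalizing d with
  | var x => simp_all
  | app f ts ih =>
    rw [levelled_app_iff] at hs
    simp only [subst_app, mark, List.map_map, app.injEq, true_and]
    exact List.map_congr_left fun t ht => ih t ht (hs t ht)

theorem eq_var_of_subst_eq_mark {ρ : ℕ → Tm} {s : Tm} (h : subst ρ s = mark d s) {z m : ℕ}
    (hm : m ∈ occs z s) : ρ z = var (d + m) := by
  induction s generalizing d m with
  | var x =>
    by_cases hx : x = z <;> simp_all [mark]
  | app f ts ih =>
    simp only [subst_app, mark, app.injEq, true_and, List.map_inj_left] at h
    simp only [occs_app, List.mem_flatMap, List.mem_map] at hm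
    obtain ⟨t, ht, m, hm, rfl⟩ := hm
    rw [ih t ht (h t ht) hm, Nat.add_assoc, Nat.add_comm 1]

end Tm

open Tm

section MGU

variable {θ : ℕ → Tm} {v t : Tm}

theorem IsMGU.exists_subst_eq (hθ : IsMGU θ v t) {g : ℕ → Tm} (hg : subst g v = subst g t)
    (S : Finset ℕ) : ∃ ρ : ℕ → Tm, ∀ x ∈ S, g x = subst ρ (θ x) := by
  classical
  -- `g` need not be finitary, but its restriction to `T` is and still unifies `v` and `t`.
  set T := S ∪ (varsL v).toFinset ∪ (varsL t).toFinset
  have hfin : Finitary (T.piecewise g var) :=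
    T.finite_toSet.subset fun x hx => by_contra fun hxT => hx (T.piecewise_eq_of_notMem _ _ hxT)
  have hunif : Unifies (T.piecewise g var) v t := by
    rw [Unifies, subst_congr (τ := g), subst_congr (s := t) (τ := g), hg] <;>
      intro x hx <;> exact T.piecewise_eq_of_mem _ _ (by simp [T, hx])
  obtain ⟨ρ, -, hρ⟩ := hθ.2.2 _ hfin hunif
  exact ⟨ρ, fun x hx => by rw [← hρ, T.piecewise_eq_of_mem _ _ (by simp [T, hx])]⟩

variable {ℓ : ℕ → ℕ}

theorem IsMGU.height_le (hθ : IsMGU θ v t) (hv : Levelled ℓ 0 v) (ht : Levelled ℓ 0 t) {B : ℕ}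
    (hvB : height v ≤ B) (htB : height t ≤ B) (x : ℕ) :
    height (θ x) ≤ B - ℓ x := by
  obtain ⟨ρ, hρ⟩ := hθ.exists_subst_eq (g := fun x => cut (B - ℓ x) (θ x))
    (by rw [hv.subst_cut hvB, ht.subst_cut htB, show subst θ v = subst θ t from hθ.2.1]) {x}
  calc height (θ x) ≤ height (subst ρ (θ x)) := height_le_height_subst ρ (θ x)
    _ = height (cut (B - ℓ x) (θ x)) := by rw [hρ x (Finset.mem_singleton_self x)]
    _ ≤ B - ℓ x := height_cut_le _ _

theorem IsMGU.exists_levelled (hθ : IsMGU θ v t) (hv : Levelled ℓ 0 v) (ht : Levelled ℓ 0 t)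
    (S : Finset ℕ) : ∃ ℓ' : ℕ → ℕ, ∀ x ∈ S, Levelled ℓ' (ℓ x) (θ x) := by
  obtain ⟨ρ, hρ⟩ := hθ.exists_subst_eq (g := fun x => mark (ℓ x) (θ x))
    (by rw [hv.subst_mark, ht.subst_mark, show subst θ v = subst θ t from hθ.2.1]) S
  have hlev : ∀ z, ∃ n, ∀ x ∈ S, ∀ m ∈ occs z (θ x), ℓ x + m = n := by
    intro z
    cases hz : ρ z with
    | var n =>
      refine ⟨n, fun x hx m hm => ?_⟩
      simpa [hz] using (eq_var_of_subst_eq_mark (hρ x hx).symm hm).symm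
    | app f ts =>
      exact ⟨0, fun x hx m hm => by simpa [hz] using eq_var_of_subst_eq_mark (hρ x hx).symm hm⟩
  choose ℓ' hℓ' using hlev
  exact ⟨ℓ', fun x hx z m hm => hℓ' z x hx m hm⟩

end MGU

theorem balancedF_iff {f : UFlow} : BalancedF f ↔ ∃ ℓ, Levelled ℓ 0 f.1 ∧ Levelled ℓ 0 f.2 := by
  constructor
  · intro hf
    have : ∀ x, ∃ n, ∀ m ∈ occs x f.1 ++ occs x f.2, m = n := by
      intro x
      cases hx : occs x f.1 ++ occs x f.2 with
      | nil => simp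
      | cons n l => exact ⟨n, fun m hm => hf x m (hx ▸ hm) n (by simp [hx])⟩
    choose ℓ hℓ using this
    exact ⟨ℓ, fun x m hm => by simpa using hℓ x m (List.mem_append_left _ hm),
      fun x m hm => by simpa using hℓ x m (List.mem_append_right _ hm)⟩
  · rintro ⟨ℓ, h₁, h₂⟩ x n hn m hm
    have hlev : ∀ k ∈ occs x f.1 ++ occs x f.2, k = ℓ x := by
      intro k hk
      rcases List.mem_append.1 hk with hk | hk
      · simpa using h₁ x k hk
      · simpa using h₂ x k hk
    rw [hlev n hn, hlev m hm]

theorem BalancedF.of_flowEquiv {f g : UFlow} (hf : BalancedF f) (hfg : FlowEquiv f g) :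
    BalancedF g := by
  obtain ⟨ℓ, h₁, h₂⟩ := balancedF_iff.1 hf
  obtain ⟨g₁, g₂⟩ := g
  obtain ⟨π, rfl, rfl⟩ := hfg
  exact balancedF_iff.2 ⟨_, h₁.rename π, h₂.rename π⟩

theorem heightF_eq_of_flowEquiv {f g : UFlow} (hfg : FlowEquiv f g) : heightF g = heightF f := by
  obtain ⟨g₁, g₂⟩ := g
  obtain ⟨π, rfl, rfl⟩ := hfg
  simp only [heightF, rename, height_subst_var]

theorem exists_levelled_of_disjoint {f g : UFlow} (hf : BalancedF f) (hg : BalancedF g)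
    (hfg : flowVars f ∩ flowVars g = ∅) :
    ∃ ℓ, Levelled ℓ 0 f.1 ∧ Levelled ℓ 0 f.2 ∧ Levelled ℓ 0 g.1 ∧ Levelled ℓ 0 g.2 := by
  classical
  obtain ⟨ℓ₁, hf₁, hf₂⟩ := balancedF_iff.1 hf
  obtain ⟨ℓ₂, hg₁, hg₂⟩ := balancedF_iff.1 hg
  have hℓ₁ : ∀ x ∈ flowVars f, ℓ₁ x = if x ∈ flowVars f then ℓ₁ x else ℓ₂ x :=
    fun x hx => (if_pos hx).symm
  have hℓ₂ : ∀ x ∈ flowVars g, ℓ₂ x = if x ∈ flowVars f then ℓ₁ x else ℓ₂ x :=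
    fun x hx => (if_neg fun hxf => (Set.eq_empty_iff_forall_notMem.1 hfg) x ⟨hxf, hx⟩).symm
  exact ⟨_, hf₁.congr fun x hx => hℓ₁ x (Or.inl hx), hf₂.congr fun x hx => hℓ₁ x (Or.inr hx),
    hg₁.congr fun x hx => hℓ₂ x (Or.inl hx), hg₂.congr fun x hx => hℓ₂ x (Or.inr hx)⟩

theorem BalancedF.of_isProd {f g p : UFlow} (hf : BalancedF f) (hg : BalancedF g)
    (hp : IsProd f g p) : BalancedF p := by
  obtain ⟨f', g', θ, hff', hgg', hdisj, hθ, rfl⟩ := hp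
  obtain ⟨ℓ, hu, hv, ht, hw⟩ :=
    exists_levelled_of_disjoint (hf.of_flowEquiv hff') (hg.of_flowEquiv hgg') hdisj
  obtain ⟨ℓ', hℓ'⟩ := hθ.exists_levelled hv ht ((varsL f'.1).toFinset ∪ (varsL g'.2).toFinset)
  exact balancedF_iff.2 ⟨ℓ', hu.subst fun x hx => hℓ' x (by simp [hx]),
    hw.subst fun x hx => hℓ' x (by simp [hx])⟩

theorem heightF_le_of_isProd {f g p : UFlow} (hf : BalancedF f) (hg : BalancedF g)
    (hp : IsProd f g p) : heightF p ≤ max (heightF f) (heightF g) := by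
  obtain ⟨f', g', θ, hff', hgg', hdisj, hθ, rfl⟩ := hp
  obtain ⟨ℓ, hu, hv, ht, hw⟩ :=
    exists_levelled_of_disjoint (hf.of_flowEquiv hff') (hg.of_flowEquiv hgg') hdisj
  rw [← heightF_eq_of_flowEquiv hff', ← heightF_eq_of_flowEquiv hgg']
  set B := max (heightF f') (heightF g')
  have hB : height f'.1 ≤ B ∧ height f'.2 ≤ B ∧ height g'.1 ≤ B ∧ height g'.2 ≤ B := by
    simp only [B, heightF]
    omega
  have hθB := hθ.height_le hv ht hB.2.1 hB.2.2.1
  exact max_le (hu.height_subst_le hB.1 fun x _ => hθB x)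
    (hw.height_subst_le hB.2.2.2 fun x _ => hθB x)

theorem heightF_le_heightW {F : Wiring} (hF : F.Finite) {f : UFlow} (hf : f ∈ F) :
    heightF f ≤ heightW F :=
  le_csSup (hF.image heightF).bddAbove (Set.mem_image_of_mem heightF hf)

theorem balanced_subsemiring_general (F G : Wiring) (hF : BalancedW F) (hG : BalancedW G)
    (hfF : F.Finite) (hfG : G.Finite) :
    BalancedW (∅ : Wiring) ∧ BalancedW (F ∪ G) ∧ BalancedW (wmul F G) ∧
    heightW (wmul F G) ≤ max (heightW F) (heightW G) := by
  refine ⟨fun f hf => hf.elim, fun f hf => hf.elim (hF f) (hG f), ?_, ?_⟩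
  · rintro p ⟨f, hf, g, hg, hp⟩
    exact (hF f hf).of_isProd (hG g hg) hp
  · refine csSup_le' ?_
    rintro _ ⟨p, ⟨f, hf, g, hg, hp⟩, rfl⟩
    exact (heightF_le_of_isProd (hF f hf) (hG g hg) hp).trans
      (max_le_max (heightF_le_heightW hfF hf) (heightF_le_heightW hfG hg))

/-- balanced wirings form a subsemiring (contain `0`, closed under
sums and products), and the height of a product is bounded by the maximum of the
heights. -/
theorem balanced_subsemiring (F G : Wiring) (hF : BalancedW F) (hG : BalancedW G)
    (hfF : F.Finite) (hfG : G.Finite)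
    (hflF : ∀ f ∈ F, IsFlow f) (hflG : ∀ g ∈ G, IsFlow g) :
    BalancedW (∅ : Wiring) ∧ BalancedW (F ∪ G) ∧ BalancedW (wmul F G) ∧
    heightW (wmul F G) ≤ max (heightW F) (heightW G) :=
  balanced_subsemiring_general F G hF hG hfF hfG
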